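/- Fix any b-coloring of the constructed graph H with k colors, and for each incident pair (e, v) let C_{e,v} be the set of colors appearing on the vertices of L_{e,v}. Then for each edge e = uv of G, either all colors of C_{e,u} appear on Y_e or all colors of C_{e,v} appear on Y_e; specifically, the colors C_{e,u} appear on Y_e if x_{e,v} is a b-vertex, and the colors C_{e,v} appear on Y_e if x_{e,u} is a b-vertex. -/

import Mathlib

open Finset

/-- `a` is a b-vertex of the coloring `c`: it has a neighbor in every color class
other than its own. -/
def IsBVertex {VH : Type*} (H : SimpleGraph VH) {k : ℕ} (c : VH → Fin k) (a : VH) : Prop :=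
  ∀ col : Fin k, col ≠ c a → ∃ b : VH, H.Adj a b ∧ c b = col

/-- `c` is a b-coloring of `H` with `k` colors: a proper coloring using all `k` colors
in which every color class contains a b-vertex. -/
def IsBColoring {VH : Type*} (H : SimpleGraph VH) (k : ℕ) (c : VH → Fin k) : Prop :=
  (∀ ⦃a b : VH⦄, H.Adj a b → c a ≠ c b) ∧ Function.Surjective c ∧
    ∀ col : Fin k, ∃ a : VH, c a = col ∧ IsBVertex H c a

variable {V : Type*} [Fintype V] [DecidableEq V]

/-- `W`, the total weight of all edges. -/
def totW (G : SimpleGraph V) [DecidableRel G.Adj] (wt : Sym2 V → ℕ) : ℕ :=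
  ∑ e ∈ G.edgeFinset, wt e

/-- `W_v`, the total weight of the edges incident with `v`. -/
def vertW (G : SimpleGraph V) [DecidableRel G.Adj] (wt : Sym2 V → ℕ) (v : V) : ℕ :=
  ∑ e ∈ G.edgeFinset.filter (fun e => v ∈ e), wt e

/-- `k = 2W + 3m + n + 2`. -/
def numColors (G : SimpleGraph V) [DecidableRel G.Adj] (wt : Sym2 V → ℕ) : ℕ :=
  2 * totW G wt + 3 * G.edgeFinset.card + Fintype.card V + 2

/-- An orientation of `(G, wt)` (given by choosing a head `o e ∈ e` for every edge `e`)
is circulating if, at every vertex, the entering weight equals the leaving weight. -/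
def IsCirculating (G : SimpleGraph V) [DecidableRel G.Adj] (wt : Sym2 V → ℕ)
    (o : Sym2 V → V) : Prop :=
  (∀ e ∈ G.edgeFinset, o e ∈ e) ∧
    ∀ v : V,
      ∑ e ∈ G.edgeFinset.filter (fun e => v ∈ e ∧ o e = v), wt e =
        ∑ e ∈ G.edgeFinset.filter (fun e => v ∈ e ∧ o e ≠ v), wt e

/-- The data of the construction of the graph `H` from `(G, wt)`. -/
structure GadgetData (V : Type*) [Fintype V] [DecidableEq V]
    (G : SimpleGraph V) [DecidableRel G.Adj] (wt : Sym2 V → ℕ) where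
  /-- the vertex type of `H` -/
  VH : Type*
  fintypeVH : Fintype VH
  decEqVH : DecidableEq VH
  /-- the graph `H` -/
  H : SimpleGraph VH
  decAdj : DecidableRel H.Adj
  /-- the center `s*` of the superstar -/
  sstar : VH
  /-- the leaves of the superstar -/
  Sleaves : Finset VH
  /-- the centers of the anonymous stars -/
  Acenters : Finset VH
  /-- the leaves of each anonymous star -/
  Aleaves : VH → Finset VH
  /-- the sets `L_{e,v}` (subsets of the superstar leaves) -/
  L : Sym2 V → V → Finset VH
  /-- the copy of a vertex of `G` inside `H` -/
  orig : V → VH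
  /-- the sets `P_v` -/
  P : V → Finset VH
  /-- the vertices `x_{e,v}` -/
  x : Sym2 V → V → VH
  /-- the sets `Y_e` -/
  Y : Sym2 V → Finset VH
  /-- the sets `Z_e` -/
  Z : Sym2 V → Finset VH
  /-- the vertices `q_{e,1}, q_{e,2}` -/
  q : Sym2 V → Fin 2 → VH

namespace GadgetData

variable {G : SimpleGraph V} [DecidableRel G.Adj] {wt : Sym2 V → ℕ}

/-- The set `X = {x_{e,v} : v ∈ e ∈ E(G)}`. -/
def Xset (g : GadgetData V G wt) : Finset g.VH :=
  letI := g.fintypeVH; letI := g.decEqVH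
  G.edgeFinset.biUnion fun e => (Finset.univ.filter fun v => v ∈ e).image (g.x e)

/-- The set `Q = {q_{e,1}, q_{e,2} : e ∈ E(G)}`. -/
def Qset (g : GadgetData V G wt) : Finset g.VH :=
  letI := g.decEqVH
  G.edgeFinset.biUnion fun e => {g.q e 0, g.q e 1}

/-- The parts into which the vertex set of `H` is partitioned. -/
def parts (g : GadgetData V G wt) : List (Finset g.VH) :=
  letI := g.fintypeVH; letI := g.decEqVH
  [{g.sstar}, g.Sleaves, g.Acenters, g.Acenters.biUnion g.Aleaves,
    Finset.univ.image g.orig, Finset.univ.biUnion g.P,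
    g.Xset, G.edgeFinset.biUnion g.Y, G.edgeFinset.biUnion g.Z, g.Qset]

/-- One directional specification of the adjacencies of `H`. -/
def AdjSpec (g : GadgetData V G wt) (a b : g.VH) : Prop :=
  (a = g.sstar ∧ b ∈ g.Sleaves) ∨
  (∃ s ∈ g.Acenters, a = s ∧ b ∈ g.Aleaves s) ∨
  (∃ v : V, a = g.orig v ∧ b ∈ g.P v) ∨
  (∃ e ∈ G.edgeFinset, ∃ v : V, v ∈ e ∧ a = g.orig v ∧ (b ∈ g.L e v ∨ b ∈ g.Y e)) ∨
  (∃ e ∈ G.edgeFinset, ∃ v : V, v ∈ e ∧ a = g.x e v ∧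
    (b ∈ g.Y e ∨ b ∈ g.Z e ∨ b ∈ g.L e v)) ∨
  (∃ e ∈ G.edgeFinset, a = g.q e 0 ∧ b = g.q e 1) ∨
  (∃ e ∈ G.edgeFinset, ∃ h : Fin 2, a = g.q e h ∧
    (b ∈ g.Z e ∨ (∃ v : V, v ∈ e ∧ b ∈ g.L e v) ∨ (∃ v : V, v ∈ e ∧ b = g.x e v)))

/-- Degree in `H`. -/
def deg (g : GadgetData V G wt) (a : g.VH) : ℕ :=
  letI := g.fintypeVH; letI := g.decEqVH; letI := g.decAdj
  g.H.degree a

/-- The set `{s*} ∪ V(G) ∪ Q ∪ A ∪ X`. -/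
def bigSet (g : GadgetData V G wt) : Finset g.VH :=
  letI := g.fintypeVH; letI := g.decEqVH
  {g.sstar} ∪ Finset.univ.image g.orig ∪ g.Qset ∪ g.Acenters ∪ g.Xset

end GadgetData

/-- The construction of the graph `H` from `(G, wt)`: the data together with all the
requirements (sizes of the parts, their disjointness, and the adjacency relation). -/
structure Gadget (V : Type*) [Fintype V] [DecidableEq V]
    (G : SimpleGraph V) [DecidableRel G.Adj] (wt : Sym2 V → ℕ)
    extends GadgetData V G wt where
  card_Sleaves : Sleaves.card = numColors G wt - 1
  card_Acenters : Acenters.card = 2 * totW G wt + 1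
  card_Aleaves : ∀ s ∈ Acenters, (Aleaves s).card = numColors G wt - 1
  Aleaves_disjoint : ∀ s ∈ Acenters, ∀ s' ∈ Acenters, s ≠ s' →
    Disjoint (Aleaves s) (Aleaves s')
  L_subset : ∀ e ∈ G.edgeFinset, ∀ v ∈ e, L e v ⊆ Sleaves
  card_L : ∀ e ∈ G.edgeFinset, ∀ v ∈ e, (L e v).card = wt e
  L_disjoint : ∀ e ∈ G.edgeFinset, ∀ v ∈ e, ∀ e' ∈ G.edgeFinset, ∀ v' ∈ e',
    (e, v) ≠ (e', v') → Disjoint (L e v) (L e' v')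
  card_P : ∀ v : V, 2 * (P v).card + 3 * vertW G wt v + 2 = 2 * numColors G wt
  card_Y : ∀ e ∈ G.edgeFinset, (Y e).card = wt e
  card_Z : ∀ e ∈ G.edgeFinset, (Z e).card + 2 * wt e + 3 = numColors G wt
  orig_inj : Function.Injective orig
  P_disjoint : ∀ v v' : V, v ≠ v' → Disjoint (P v) (P v')
  x_inj : ∀ e ∈ G.edgeFinset, ∀ v ∈ e, ∀ e' ∈ G.edgeFinset, ∀ v' ∈ e',
    x e v = x e' v' → (e, v) = (e', v')
  Y_disjoint : ∀ e ∈ G.edgeFinset, ∀ e' ∈ G.edgeFinset, e ≠ e' → Disjoint (Y e) (Y e')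
  Z_disjoint : ∀ e ∈ G.edgeFinset, ∀ e' ∈ G.edgeFinset, e ≠ e' → Disjoint (Z e) (Z e')
  q_inj : ∀ e ∈ G.edgeFinset, ∀ h : Fin 2, ∀ e' ∈ G.edgeFinset, ∀ h' : Fin 2,
    q e h = q e' h' → (e, h) = (e', h')
  parts_disjoint : toGadgetData.parts.Pairwise Disjoint
  parts_cover : ∀ a : VH, ∃ p ∈ toGadgetData.parts, a ∈ p
  adj_iff : ∀ a b : VH, H.Adj a b ↔
    toGadgetData.AdjSpec a b ∨ toGadgetData.AdjSpec b a

/-!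
A b-vertex has degree at least `k - 1`, while every leaf of a star and every vertex of some
`P_v`, `Y_e` or `Z_e` has degree at most `5 < k - 1`. So the `k` colours have their b-vertices
in `{s*} ∪ V(G) ∪ A ∪ X ∪ Q`, only `2W + n + 2` of which lie outside `X ∪ Q`: the `m` gadgets
`{x_{e,u}, x_{e,v}, q_{e,1}, q_{e,2}}` carry b-vertices of at least `3m` colours.

The vertex `q_{e,h}` has `k` neighbours, so if it is a b-vertex at most one colour repeats
among them. A b-vertex `x_{e,u}` coloured differently from `x_{e,v}` finds the colour of
`x_{e,v}` on `L_{e,u}`, its only neighbours not adjacent to `x_{e,v}`; either way `q_{e,h}` sees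
the colour of `x_{e,v}` twice. Hence `x_{e,u}` and `x_{e,v}` are not b-vertices of different
colours while some `q_{e,h}` is one, every gadget carries b-vertices of at most, hence exactly,
three colours, and some `q_{e,h}` and some `x_{e,u}` are b-vertices. For `ℓ ∈ L_{e,v}` the colour
of `ℓ` may not repeat around `q_{e,h}`, so `x_{e,u}` sees it neither on itself nor on
`Z_e ∪ L_{e,u}`; being a b-vertex, it sees it on `Y_e`.
-/

lemma Finset.card_image_add_two_le {α β : Type*} [DecidableEq α] [DecidableEq β] {f : α → β}
    {s : Finset α} {a₁ b₁ a₂ b₂ : α} (ha₁ : a₁ ∈ s) (hb₁ : b₁ ∈ s) (hab₁ : a₁ ≠ b₁)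
    (hf₁ : f a₁ = f b₁) (ha₂ : a₂ ∈ s) (hb₂ : b₂ ∈ s) (hab₂ : a₂ ≠ b₂) (hf₂ : f a₂ = f b₂)
    (hf : f a₁ ≠ f a₂) : (s.image f).card + 2 ≤ s.card := by
  have hb : b₂ ∈ s.erase b₁ := mem_erase.2 ⟨fun h => hf (by rw [hf₁, hf₂, h]), hb₂⟩
  have hsub : s.image f ⊆ ((s.erase b₁).erase b₂).image f := by
    intro y hy
    obtain ⟨a, ha, rfl⟩ := mem_image.1 hy
    by_cases h₁ : a = b₁
    · subst h₁
      refine mem_image.2 ⟨a₁, mem_erase.2 ⟨?_, mem_erase.2 ⟨hab₁, ha₁⟩⟩, hf₁⟩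
      exact fun h => hf (by rw [h, hf₂])
    by_cases h₂ : a = b₂
    · subst h₂
      refine mem_image.2 ⟨a₂, mem_erase.2 ⟨hab₂, mem_erase.2 ⟨?_, ha₂⟩⟩, hf₂⟩
      exact fun h => hf (by rw [hf₁, ← h])
    exact mem_image_of_mem f (mem_erase.2 ⟨h₂, mem_erase.2 ⟨h₁, ha⟩⟩)
  have := (card_le_card hsub).trans card_image_le
  have := card_pos.2 ⟨b₂, hb⟩
  rw [card_erase_of_mem hb, card_erase_of_mem hb₁] at *
  omega

lemma Finset.card_le_add_sum_card_inter {α ι : Type*} [DecidableEq α] {B R : Finset α}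
    {E : Finset ι} {T : ι → Finset α} (h : B ⊆ R ∪ E.biUnion T) :
    B.card ≤ R.card + ∑ i ∈ E, (B ∩ T i).card := by
  have hB : B ⊆ R ∪ E.biUnion fun i => B ∩ T i := by
    intro b hb
    rcases mem_union.1 (h hb) with hR | hT
    · exact mem_union_left _ hR
    · obtain ⟨i, hi, hbi⟩ := mem_biUnion.1 hT
      exact mem_union_right _ (mem_biUnion.2 ⟨i, hi, mem_inter.2 ⟨hb, hbi⟩⟩)
  calc B.card ≤ R.card + (E.biUnion fun i => B ∩ T i).card :=
        (card_le_card hB).trans (card_union_le _ _)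
    _ ≤ R.card + ∑ i ∈ E, (B ∩ T i).card := by gcongr; exact card_biUnion_le

lemma Finset.mem_or_mem_of_three_le_card_inter {α : Type*} [DecidableEq α] {B : Finset α}
    {a b c d : α} (h : 3 ≤ (B ∩ {a, b, c, d}).card) : (a ∈ B ∨ b ∈ B) ∧ (c ∈ B ∨ d ∈ B) := by
  constructor <;> by_contra! hB
  · have : B ∩ {a, b, c, d} ⊆ {c, d} := by intro x; grind
    have := (card_le_card this).trans card_le_two
    omega
  · have : B ∩ {a, b, c, d} ⊆ {a, b} := by intro x; grind
    have := (card_le_card this).trans card_le_two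
    omega

lemma SimpleGraph.degree_le_card_of_forall_adj_mem {W : Type*} {H : SimpleGraph W} {a : W}
    [Fintype (H.neighborSet a)] {s : Finset W} (h : ∀ b, H.Adj a b → b ∈ s) :
    H.degree a ≤ s.card :=
  card_le_card fun b hb => h b ((H.mem_neighborFinset a b).1 hb)

namespace IsBVertex

variable {VH : Type*} {H : SimpleGraph VH} {k : ℕ} {c : VH → Fin k} {a : VH}
  [Fintype (H.neighborSet a)]

lemma sub_one_le_card_image (ha : IsBVertex H c a) :
    k - 1 ≤ ((H.neighborFinset a).image c).card :=
  calc k - 1 = (univ.erase (c a)).card := by simp [card_erase_of_mem]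
    _ ≤ _ := card_le_card fun col hcol => by
        obtain ⟨b, hab, rfl⟩ := ha col (ne_of_mem_erase hcol)
        exact mem_image_of_mem c ((H.mem_neighborFinset a b).2 hab)

lemma sub_one_le_degree (ha : IsBVertex H c a) : k - 1 ≤ H.degree a :=
  ha.sub_one_le_card_image.trans card_image_le

lemma color_eq_of_collisions [DecidableEq VH] (ha : IsBVertex H c a) (hdeg : H.degree a ≤ k)
    {a₁ b₁ a₂ b₂ : VH} (ha₁ : H.Adj a a₁) (hb₁ : H.Adj a b₁) (hab₁ : a₁ ≠ b₁)
    (hc₁ : c a₁ = c b₁) (ha₂ : H.Adj a a₂) (hb₂ : H.Adj a b₂) (hab₂ : a₂ ≠ b₂)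
    (hc₂ : c a₂ = c b₂) : c a₁ = c a₂ := by
  by_contra hne
  rw [← SimpleGraph.mem_neighborFinset] at ha₁ hb₁ ha₂ hb₂
  have := card_image_add_two_le ha₁ hb₁ hab₁ hc₁ ha₂ hb₂ hab₂ hc₂ hne
  have := ha.sub_one_le_card_image
  have : 0 < k := Fin.pos (c a)
  rw [SimpleGraph.card_neighborFinset_eq_degree] at *
  omega

end IsBVertex

lemma seven_le_numColors {V : Type*} [Fintype V] {G : SimpleGraph V} [DecidableRel G.Adj]
    {wt : Sym2 V → ℕ} {e : Sym2 V} (he : e ∈ G.edgeFinset) : 7 ≤ numColors G wt := by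
  induction e using Sym2.inductionOn with | hf u v => ?_
  have : 2 ≤ Fintype.card V :=
    Fintype.one_lt_card_iff.2 ⟨u, v, (G.mem_edgeSet.1 (G.mem_edgeFinset.1 he)).ne⟩
  have : 1 ≤ G.edgeFinset.card := card_pos.2 ⟨_, he⟩
  unfold numColors
  omega

namespace GadgetData

variable {G : SimpleGraph V} [DecidableRel G.Adj] {wt : Sym2 V → ℕ}

instance (g : GadgetData V G wt) : Fintype g.VH := g.fintypeVH

instance (g : GadgetData V G wt) : DecidableEq g.VH := g.decEqVH

instance (g : GadgetData V G wt) : DecidableRel g.H.Adj := g.decAdj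

def xqVertices (g : GadgetData V G wt) (e : Sym2 V) : Finset g.VH :=
  (univ.filter (· ∈ e)).image (g.x e) ∪ {g.q e 0, g.q e 1}

end GadgetData

namespace Gadget

variable {G : SimpleGraph V} [DecidableRel G.Adj] {wt : Sym2 V → ℕ} (g : Gadget V G wt)

lemma eq_of_mem_parts {a : g.VH} {i j : ℕ} (hi : i < g.parts.length) (hj : j < g.parts.length)
    (hai : a ∈ g.parts[i]) (haj : a ∈ g.parts[j]) : i = j := by
  have hdisj := List.pairwise_iff_getElem.1 g.parts_disjoint
  by_contra hij
  rcases Nat.lt_or_gt_of_ne hij with h | h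
  · exact disjoint_left.1 (hdisj i j hi hj h) hai haj
  · exact disjoint_left.1 (hdisj j i hj hi h) haj hai

lemma exists_mem_parts (a : g.VH) : ∃ i, ∃ hi : i < g.parts.length, a ∈ g.parts[i] := by
  obtain ⟨p, hp, ha⟩ := g.parts_cover a
  obtain ⟨i, hi, rfl⟩ := List.mem_iff_getElem.1 hp
  exact ⟨i, hi, ha⟩

/-- The index in `g.parts` of the part containing `a`. The lemmas below giving its value on each
part are tagged for `grind`, which thereby knows that distinct parts are disjoint. -/
noncomputable def partIndex (a : g.VH) : ℕ := (g.exists_mem_parts a).choose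

lemma partIndex_eq {a : g.VH} {i : ℕ} (hi : i < 10) (ha : a ∈ g.parts[i]'hi) :
    g.partIndex a = i :=
  have h := (g.exists_mem_parts a).choose_spec
  g.eq_of_mem_parts h.1 hi h.2 ha

variable {g} {a b : g.VH} {e : Sym2 V} {u v : V} {h : Fin 2}

@[grind =] lemma partIndex_sstar : g.partIndex g.sstar = 0 :=
  g.partIndex_eq (by decide) (mem_singleton_self _)

@[grind →] lemma partIndex_of_mem_Sleaves (ha : a ∈ g.Sleaves) : g.partIndex a = 1 :=
  g.partIndex_eq (by decide) ha

@[grind →] lemma partIndex_of_mem_L (he : e ∈ G.edgeFinset) (hv : v ∈ e) (ha : a ∈ g.L e v) :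
    g.partIndex a = 1 :=
  partIndex_of_mem_Sleaves (g.L_subset e he v hv ha)

@[grind →] lemma partIndex_of_mem_Acenters (ha : a ∈ g.Acenters) : g.partIndex a = 2 :=
  g.partIndex_eq (by decide) ha

@[grind →] lemma partIndex_of_mem_Aleaves {s : g.VH} (hs : s ∈ g.Acenters)
    (ha : a ∈ g.Aleaves s) : g.partIndex a = 3 :=
  g.partIndex_eq (by decide) (mem_biUnion.2 ⟨s, hs, ha⟩)

@[grind =] lemma partIndex_orig (v : V) : g.partIndex (g.orig v) = 4 :=
  g.partIndex_eq (by decide) (mem_image_of_mem _ (mem_univ v))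

@[grind →] lemma partIndex_of_mem_P (ha : a ∈ g.P v) : g.partIndex a = 5 :=
  g.partIndex_eq (by decide) (mem_biUnion.2 ⟨v, mem_univ v, ha⟩)

@[grind =] lemma partIndex_x (he : e ∈ G.edgeFinset) (hv : v ∈ e) : g.partIndex (g.x e v) = 6 :=
  g.partIndex_eq (by decide)
    (mem_biUnion.2 ⟨e, he, mem_image_of_mem _ (mem_filter.2 ⟨mem_univ v, hv⟩)⟩)

@[grind →] lemma partIndex_of_mem_Y (he : e ∈ G.edgeFinset) (ha : a ∈ g.Y e) :
    g.partIndex a = 7 :=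
  g.partIndex_eq (by decide) (mem_biUnion.2 ⟨e, he, ha⟩)

@[grind →] lemma partIndex_of_mem_Z (he : e ∈ G.edgeFinset) (ha : a ∈ g.Z e) :
    g.partIndex a = 8 :=
  g.partIndex_eq (by decide) (mem_biUnion.2 ⟨e, he, ha⟩)

@[grind =] lemma partIndex_q (he : e ∈ G.edgeFinset) (h : Fin 2) : g.partIndex (g.q e h) = 9 :=
  g.partIndex_eq (by decide) (mem_biUnion.2 ⟨e, he, by fin_cases h <;> simp⟩)

lemma eq_of_mem_Aleaves {s t : g.VH} (hs : s ∈ g.Acenters) (ht : t ∈ g.Acenters)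
    (has : a ∈ g.Aleaves s) (hat : a ∈ g.Aleaves t) : s = t := by
  by_contra hst
  exact disjoint_left.1 (g.Aleaves_disjoint s hs t ht hst) has hat

lemma eq_of_mem_P {w : V} (hv : a ∈ g.P v) (hw : a ∈ g.P w) : v = w := by
  by_contra hvw
  exact disjoint_left.1 (g.P_disjoint v w hvw) hv hw

lemma eq_of_mem_L {e' : Sym2 V} {v' : V} (he : e ∈ G.edgeFinset) (hv : v ∈ e)
    (he' : e' ∈ G.edgeFinset) (hv' : v' ∈ e') (ha : a ∈ g.L e v) (ha' : a ∈ g.L e' v') :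
    e = e' ∧ v = v' := by
  by_contra hne
  exact disjoint_left.1 (g.L_disjoint e he v hv e' he' v' hv' (by simpa using hne)) ha ha'

lemma eq_of_mem_Y {e' : Sym2 V} (he : e ∈ G.edgeFinset) (he' : e' ∈ G.edgeFinset)
    (ha : a ∈ g.Y e) (ha' : a ∈ g.Y e') : e = e' := by
  by_contra hne
  exact disjoint_left.1 (g.Y_disjoint e he e' he' hne) ha ha'

lemma eq_of_mem_Z {e' : Sym2 V} (he : e ∈ G.edgeFinset) (he' : e' ∈ G.edgeFinset)
    (ha : a ∈ g.Z e) (ha' : a ∈ g.Z e') : e = e' := by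
  by_contra hne
  exact disjoint_left.1 (g.Z_disjoint e he e' he' hne) ha ha'

lemma eq_of_x_eq {e' : Sym2 V} {v' : V} (he : e ∈ G.edgeFinset) (hv : v ∈ e)
    (he' : e' ∈ G.edgeFinset) (hv' : v' ∈ e') (hx : g.x e v = g.x e' v') : e = e' ∧ v = v' := by
  simpa using g.x_inj e he v hv e' he' v' hv' hx

lemma eq_of_q_eq {e' : Sym2 V} {h' : Fin 2} (he : e ∈ G.edgeFinset)
    (he' : e' ∈ G.edgeFinset) (hq : g.q e h = g.q e' h') : e = e' ∧ h = h' := by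
  simpa using g.q_inj e he h e' he' h' hq

lemma x_ne_x (he : e ∈ G.edgeFinset) (huv : e = s(u, v)) : g.x e u ≠ g.x e v := fun hx => by
  subst huv
  exact (G.mem_edgeSet.1 (G.mem_edgeFinset.1 he)).ne
    (eq_of_x_eq he (Sym2.mem_mk_left u v) he (Sym2.mem_mk_right u v) hx).2

lemma ne_x_of_mem_L {e' : Sym2 V} {v' : V} (he : e ∈ G.edgeFinset) (hv : v ∈ e)
    (he' : e' ∈ G.edgeFinset) (hv' : v' ∈ e') (hb : b ∈ g.L e v) : b ≠ g.x e' v' := by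
  grind

lemma ne_of_mem_Z_of_mem_L (he : e ∈ G.edgeFinset) (hv : v ∈ e) (ha : a ∈ g.Z e)
    (hb : b ∈ g.L e v) : a ≠ b := by
  grind

lemma adj_x_of_mem_Y (he : e ∈ G.edgeFinset) (hv : v ∈ e) (hb : b ∈ g.Y e) :
    g.H.Adj (g.x e v) b := by
  rw [g.adj_iff]; unfold GadgetData.AdjSpec; grind

lemma adj_x_of_mem_Z (he : e ∈ G.edgeFinset) (hv : v ∈ e) (hb : b ∈ g.Z e) :
    g.H.Adj (g.x e v) b := by
  rw [g.adj_iff]; unfold GadgetData.AdjSpec; grind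

lemma adj_x_of_mem_L (he : e ∈ G.edgeFinset) (hv : v ∈ e) (hb : b ∈ g.L e v) :
    g.H.Adj (g.x e v) b := by
  rw [g.adj_iff]; unfold GadgetData.AdjSpec; grind

lemma adj_q_of_mem_Z (he : e ∈ G.edgeFinset) (h : Fin 2) (hb : b ∈ g.Z e) :
    g.H.Adj (g.q e h) b := by
  rw [g.adj_iff]; unfold GadgetData.AdjSpec; grind

lemma adj_q_of_mem_L (he : e ∈ G.edgeFinset) (hv : v ∈ e) (h : Fin 2) (hb : b ∈ g.L e v) :
    g.H.Adj (g.q e h) b := by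
  rw [g.adj_iff]; unfold GadgetData.AdjSpec; grind

lemma adj_q_x (he : e ∈ G.edgeFinset) (hv : v ∈ e) (h : Fin 2) : g.H.Adj (g.q e h) (g.x e v) := by
  rw [g.adj_iff]; unfold GadgetData.AdjSpec; grind

lemma adj_of_mem_Sleaves (ha : a ∈ g.Sleaves) (hab : g.H.Adj a b) :
    b = g.sstar ∨ ∃ e ∈ G.edgeFinset, ∃ v ∈ e, a ∈ g.L e v ∧
      (b = g.orig v ∨ b = g.x e v ∨ ∃ h, b = g.q e h) := by
  rw [g.adj_iff] at hab
  unfold GadgetData.AdjSpec at hab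
  grind (splits := 40)

lemma eq_of_adj_of_mem_Aleaves {s : g.VH} (hs : s ∈ g.Acenters) (ha : a ∈ g.Aleaves s)
    (hab : g.H.Adj a b) : b = s := by
  rw [g.adj_iff] at hab
  unfold GadgetData.AdjSpec at hab
  grind (splits := 40) [eq_of_mem_Aleaves]

lemma eq_orig_of_adj_of_mem_P (ha : a ∈ g.P v) (hab : g.H.Adj a b) : b = g.orig v := by
  rw [g.adj_iff] at hab
  unfold GadgetData.AdjSpec at hab
  grind (splits := 40) [eq_of_mem_P]

lemma adj_of_mem_Y (he : e ∈ G.edgeFinset) (huv : e = s(u, v)) (ha : a ∈ g.Y e)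
    (hab : g.H.Adj a b) : b = g.orig u ∨ b = g.orig v ∨ b = g.x e u ∨ b = g.x e v := by
  subst huv
  rw [g.adj_iff] at hab
  unfold GadgetData.AdjSpec at hab
  grind (splits := 40) [eq_of_mem_Y]

lemma adj_of_mem_Z (he : e ∈ G.edgeFinset) (huv : e = s(u, v)) (ha : a ∈ g.Z e)
    (hab : g.H.Adj a b) : b = g.x e u ∨ b = g.x e v ∨ ∃ h, b = g.q e h := by
  subst huv
  rw [g.adj_iff] at hab
  unfold GadgetData.AdjSpec at hab
  grind (splits := 40) [eq_of_mem_Z]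

lemma adj_x (he : e ∈ G.edgeFinset) (hv : v ∈ e) (hab : g.H.Adj (g.x e v) b) :
    b ∈ g.Y e ∨ b ∈ g.Z e ∨ b ∈ g.L e v ∨ ∃ h, b = g.q e h := by
  rw [g.adj_iff] at hab
  unfold GadgetData.AdjSpec at hab
  grind (splits := 40) [eq_of_x_eq]

lemma adj_q (he : e ∈ G.edgeFinset) (huv : e = s(u, v)) (hab : g.H.Adj (g.q e h) b) :
    b ∈ g.Z e ∨ b ∈ g.L e u ∨ b ∈ g.L e v ∨ b = g.x e u ∨ b = g.x e v ∨
      ∃ h, b = g.q e h := by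
  subst huv
  rw [g.adj_iff] at hab
  unfold GadgetData.AdjSpec at hab
  grind (splits := 40) [eq_of_q_eq]

lemma degree_le_of_mem_Sleaves (ha : a ∈ g.Sleaves) : g.H.degree a ≤ 5 := by
  by_cases hL : ∃ e ∈ G.edgeFinset, ∃ v ∈ e, a ∈ g.L e v
  · obtain ⟨e, he, v, hv, haL⟩ := hL
    refine (SimpleGraph.degree_le_card_of_forall_adj_mem
      (s := {g.sstar, g.orig v, g.x e v, g.q e 0, g.q e 1}) fun b hab => ?_).trans card_le_five
    rcases adj_of_mem_Sleaves ha hab with rfl | ⟨e', he', v', hv', haL', hb⟩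
    · simp
    · obtain ⟨rfl, rfl⟩ := eq_of_mem_L he' hv' he hv haL' haL
      rcases hb with rfl | rfl | ⟨h, rfl⟩ <;> try fin_cases h
      all_goals simp
  · refine (SimpleGraph.degree_le_card_of_forall_adj_mem (s := {g.sstar}) fun b hab => ?_).trans
      (by simp)
    rcases adj_of_mem_Sleaves ha hab with rfl | ⟨e, he, v, hv, haL, -⟩
    · exact mem_singleton_self _
    · exact absurd ⟨e, he, v, hv, haL⟩ hL

lemma degree_le_of_mem_Aleaves {s : g.VH} (hs : s ∈ g.Acenters) (ha : a ∈ g.Aleaves s) :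
    g.H.degree a ≤ 1 :=
  (SimpleGraph.degree_le_card_of_forall_adj_mem (s := {s}) fun _ hab =>
    mem_singleton.2 (eq_of_adj_of_mem_Aleaves hs ha hab)).trans (card_singleton _).le

lemma degree_le_of_mem_P (ha : a ∈ g.P v) : g.H.degree a ≤ 1 :=
  (SimpleGraph.degree_le_card_of_forall_adj_mem (s := {g.orig v}) fun _ hab =>
    mem_singleton.2 (eq_orig_of_adj_of_mem_P ha hab)).trans (card_singleton _).le

lemma degree_le_of_mem_Y (he : e ∈ G.edgeFinset) (ha : a ∈ g.Y e) : g.H.degree a ≤ 4 := by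
  induction e using Sym2.inductionOn with | hf u v => ?_
  refine (SimpleGraph.degree_le_card_of_forall_adj_mem
    (s := {g.orig u, g.orig v, g.x s(u, v) u, g.x s(u, v) v}) fun b hab => ?_).trans card_le_four
  rcases adj_of_mem_Y he rfl ha hab with rfl | rfl | rfl | rfl <;> simp

lemma degree_le_of_mem_Z (he : e ∈ G.edgeFinset) (ha : a ∈ g.Z e) : g.H.degree a ≤ 4 := by
  induction e using Sym2.inductionOn with | hf u v => ?_
  refine (SimpleGraph.degree_le_card_of_forall_adj_mem
    (s := {g.x s(u, v) u, g.x s(u, v) v, g.q s(u, v) 0, g.q s(u, v) 1}) fun b hab => ?_).trans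
    card_le_four
  rcases adj_of_mem_Z he rfl ha hab with rfl | rfl | ⟨h, rfl⟩ <;> try fin_cases h
  all_goals simp

lemma degree_q_le (he : e ∈ G.edgeFinset) (huv : e = s(u, v)) (h : Fin 2) :
    g.H.degree (g.q e h) ≤ numColors G wt := by
  subst huv
  set S : Finset g.VH := g.Z s(u, v) ∪ g.L s(u, v) u ∪ g.L s(u, v) v ∪
    {g.x s(u, v) u, g.x s(u, v) v, g.q s(u, v) 0, g.q s(u, v) 1}
  have hqS : g.q s(u, v) h ∈ S := by fin_cases h <;> simp [S]
  calc g.H.degree (g.q s(u, v) h) ≤ (S.erase (g.q s(u, v) h)).card :=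
        SimpleGraph.degree_le_card_of_forall_adj_mem fun b hab => mem_erase.2 ⟨hab.ne.symm, by
          rcases adj_q he rfl hab with hb | hb | hb | rfl | rfl | ⟨h', rfl⟩ <;> try fin_cases h'
          all_goals simp [S, *]⟩
    _ ≤ numColors G wt := by
        have hS : S.card ≤ (g.Z s(u, v)).card + (g.L s(u, v) u).card + (g.L s(u, v) v).card + 4 :=
          (card_union_le _ _).trans <| add_le_add ((card_union_le _ _).trans <|
            Nat.add_le_add_right (card_union_le _ _) _) card_le_four
        have := g.card_Z _ he
        have := g.card_L _ he u (Sym2.mem_mk_left u v)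
        have := g.card_L _ he v (Sym2.mem_mk_right u v)
        rw [card_erase_of_mem hqS]
        omega

variable {c : g.VH → Fin (numColors G wt)}

lemma mem_bigSet_of_isBVertex (hk : 7 ≤ numColors G wt) (ha : IsBVertex g.H c a) :
    a ∈ g.bigSet := by
  have hdeg := ha.sub_one_le_degree
  obtain ⟨p, hp, hap⟩ := g.parts_cover a
  simp only [GadgetData.parts, List.mem_cons, List.not_mem_nil, or_false] at hp
  rcases hp with rfl | rfl | rfl | rfl | rfl | rfl | rfl | rfl | rfl | rfl
  · simp [GadgetData.bigSet, mem_singleton.1 hap]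
  · have := degree_le_of_mem_Sleaves hap; omega
  · simp [GadgetData.bigSet, hap]
  · obtain ⟨s, hs, has⟩ := mem_biUnion.1 hap
    have := degree_le_of_mem_Aleaves hs has; omega
  · simp [GadgetData.bigSet, hap]
  · obtain ⟨v, -, hav⟩ := mem_biUnion.1 hap
    have := degree_le_of_mem_P hav; omega
  · simp [GadgetData.bigSet, hap]
  · obtain ⟨e, he, hae⟩ := mem_biUnion.1 hap
    have := degree_le_of_mem_Y he hae; omega
  · obtain ⟨e, he, hae⟩ := mem_biUnion.1 hap
    have := degree_le_of_mem_Z he hae; omega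
  · simp [GadgetData.bigSet, hap]

lemma exists_mem_L_color_eq_x (hc : ∀ ⦃a b⦄, g.H.Adj a b → c a ≠ c b) (he : e ∈ G.edgeFinset)
    (huv : e = s(u, v)) (hx : IsBVertex g.H c (g.x e u)) (hne : c (g.x e u) ≠ c (g.x e v)) :
    ∃ b ∈ g.L e u, c b = c (g.x e v) := by
  have hu : u ∈ e := huv ▸ Sym2.mem_mk_left u v
  have hv : v ∈ e := huv ▸ Sym2.mem_mk_right u v
  obtain ⟨b, hb, hbc⟩ := hx _ hne.symm
  rcases adj_x he hu hb with hY | hZ | hL | ⟨h, rfl⟩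
  · exact absurd hbc.symm (hc (adj_x_of_mem_Y he hv hY))
  · exact absurd hbc.symm (hc (adj_x_of_mem_Z he hv hZ))
  · exact ⟨b, hL, hbc⟩
  · exact absurd hbc (hc (adj_q_x he hv h))

lemma color_x_eq (hc : ∀ ⦃a b⦄, g.H.Adj a b → c a ≠ c b) (he : e ∈ G.edgeFinset)
    (huv : e = s(u, v)) (hxu : IsBVertex g.H c (g.x e u)) (hxv : IsBVertex g.H c (g.x e v))
    (hq : IsBVertex g.H c (g.q e h)) : c (g.x e u) = c (g.x e v) := by
  have hu : u ∈ e := huv ▸ Sym2.mem_mk_left u v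
  have hv : v ∈ e := huv ▸ Sym2.mem_mk_right u v
  by_contra hne
  obtain ⟨b₁, hb₁, hc₁⟩ := exists_mem_L_color_eq_x hc he huv hxu hne
  obtain ⟨b₂, hb₂, hc₂⟩ :=
    exists_mem_L_color_eq_x hc he (huv.trans Sym2.eq_swap) hxv (Ne.symm hne)
  have := hq.color_eq_of_collisions (degree_q_le he huv h)
    (adj_q_of_mem_L he hu h hb₁) (adj_q_x he hv h) (ne_x_of_mem_L he hu he hv hb₁) hc₁
    (adj_q_of_mem_L he hv h hb₂) (adj_q_x he hu h) (ne_x_of_mem_L he hv he hu hb₂) hc₂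
  exact hne (by rw [← hc₁, ← hc₂, this])

lemma image_L_subset_image_Y (hc : ∀ ⦃a b⦄, g.H.Adj a b → c a ≠ c b) (he : e ∈ G.edgeFinset)
    (huv : e = s(u, v)) (hx : IsBVertex g.H c (g.x e u)) (hq : IsBVertex g.H c (g.q e h)) :
    (g.L e v).image c ⊆ (g.Y e).image c := by
  have hu : u ∈ e := huv ▸ Sym2.mem_mk_left u v
  have hv : v ∈ e := huv ▸ Sym2.mem_mk_right u v
  intro col hcol
  obtain ⟨ℓ, hℓ, rfl⟩ := mem_image.1 hcol
  obtain ⟨p, hpq, hpx, hpc⟩ : ∃ p, g.H.Adj (g.q e h) p ∧ p ≠ g.x e v ∧ c p = c (g.x e v) := by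
    by_cases hxc : c (g.x e u) = c (g.x e v)
    · exact ⟨g.x e u, adj_q_x he hu h, x_ne_x he huv, hxc⟩
    · obtain ⟨b, hb, hbc⟩ := exists_mem_L_color_eq_x hc he huv hx hxc
      exact ⟨b, adj_q_of_mem_L he hu h hb, ne_x_of_mem_L he hu he hv hb, hbc⟩
  -- `q` sees the colour of `x_{e,v}` twice, so it cannot see the other colour of `ℓ` twice
  have no_repeat : ∀ b, g.H.Adj (g.q e h) b → b ≠ ℓ → c b ≠ c ℓ := fun b hb hbℓ hbc =>
    hc (adj_x_of_mem_L he hv hℓ) <| by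
      rw [← hpc, ← hbc, hq.color_eq_of_collisions (degree_q_le he huv h) hb
        (adj_q_of_mem_L he hv h hℓ) hbℓ hbc hpq (adj_q_x he hv h) hpx hpc]
  obtain ⟨b, hb, hbc⟩ := hx (c ℓ) fun hℓx =>
    no_repeat _ (adj_q_x he hu h) (ne_x_of_mem_L he hv he hu hℓ).symm hℓx.symm
  rcases adj_x he hu hb with hY | hZ | hL | ⟨h', rfl⟩
  · exact mem_image.2 ⟨b, hY, hbc⟩
  · exact absurd hbc (no_repeat b (adj_q_of_mem_Z he h hZ) (ne_of_mem_Z_of_mem_L he hv hZ hℓ))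
  · refine absurd hbc (no_repeat b (adj_q_of_mem_L he hu h hL) fun hbℓ => ?_)
    exact x_ne_x (g := g) he huv (by rw [(eq_of_mem_L he hu he hv hL (hbℓ ▸ hℓ)).2])
  · exact absurd hbc (hc (adj_q_of_mem_L he hv h' hℓ))

lemma xqVertices_eq (huv : e = s(u, v)) :
    g.xqVertices e = {g.x e u, g.x e v, g.q e 0, g.q e 1} := by
  subst huv
  ext b
  simp only [GadgetData.xqVertices, mem_union, mem_image, mem_filter, mem_univ, true_and,
    Sym2.mem_iff, mem_insert, mem_singleton]
  grind

lemma bigSet_subset :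
    g.bigSet ⊆ {g.sstar} ∪ univ.image g.orig ∪ g.Acenters ∪ G.edgeFinset.biUnion g.xqVertices := by
  intro b hb
  simp only [GadgetData.bigSet, GadgetData.Qset, GadgetData.Xset, GadgetData.xqVertices,
    mem_union, mem_biUnion] at hb ⊢
  grind

lemma card_sstar_orig_Acenters_le :
    ({g.sstar} ∪ univ.image g.orig ∪ g.Acenters).card ≤ 2 * totW G wt + Fintype.card V + 2 := by
  have := card_union_le ({g.sstar} ∪ univ.image g.orig) g.Acenters
  have := card_union_le {g.sstar} (univ.image g.orig)
  have : (univ.image g.orig).card ≤ Fintype.card V := card_image_le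
  have := g.card_Acenters
  rw [card_singleton] at *
  omega

lemma card_inter_xqVertices_le_three (hc : ∀ ⦃a b⦄, g.H.Adj a b → c a ≠ c b)
    {B : Finset g.VH} (hB : ∀ b ∈ B, IsBVertex g.H c b) (hinj : Set.InjOn c B)
    (he : e ∈ G.edgeFinset) : (B ∩ g.xqVertices e).card ≤ 3 := by
  induction e using Sym2.inductionOn with | hf u v => ?_
  rw [xqVertices_eq rfl]
  by_contra! h4
  have hsub : {g.x s(u, v) u, g.x s(u, v) v, g.q s(u, v) 0, g.q s(u, v) 1} ⊆ B := by
    rw [← eq_of_subset_of_card_le inter_subset_right (card_le_four.trans h4)]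
    exact inter_subset_left
  have hxu : g.x s(u, v) u ∈ B := hsub (by simp)
  have hxv : g.x s(u, v) v ∈ B := hsub (by simp)
  have hq : g.q s(u, v) 0 ∈ B := hsub (by simp)
  exact x_ne_x he rfl (hinj hxu hxv (color_x_eq hc he rfl (hB _ hxu) (hB _ hxv) (hB _ hq)))

lemma three_le_card_inter_xqVertices (hc : ∀ ⦃a b⦄, g.H.Adj a b → c a ≠ c b)
    {B : Finset g.VH} (hB : ∀ b ∈ B, IsBVertex g.H c b) (hinj : Set.InjOn c B)
    (hcard : B.card = numColors G wt) (he : e ∈ G.edgeFinset) :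
    3 ≤ (B ∩ g.xqVertices e).card := by
  have hk := seven_le_numColors (wt := wt) he
  have hcount := card_le_add_sum_card_inter fun b hb =>
    g.bigSet_subset (mem_bigSet_of_isBVertex hk (hB b hb))
  rw [← add_sum_erase _ _ he] at hcount
  have hsum : ∑ e' ∈ G.edgeFinset.erase e, (B ∩ g.xqVertices e').card ≤
      (G.edgeFinset.erase e).card * 3 :=
    sum_le_card_nsmul _ _ _ fun e' he' =>
      card_inter_xqVertices_le_three hc hB hinj (mem_of_mem_erase he')
  rw [card_erase_of_mem he] at hsum
  have := g.card_sstar_orig_Acenters_le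
  have : 1 ≤ G.edgeFinset.card := card_pos.2 ⟨e, he⟩
  unfold numColors at hcard
  omega

lemma exists_isBVertex_q_and_x (hc : IsBColoring g.H (numColors G wt) c)
    (he : e ∈ G.edgeFinset) (huv : e = s(u, v)) :
    (∃ h, IsBVertex g.H c (g.q e h)) ∧ (IsBVertex g.H c (g.x e u) ∨ IsBVertex g.H c (g.x e v)) := by
  obtain ⟨hprop, -, hb⟩ := hc
  choose β hβc hβb using hb
  have hβ : Function.Injective β := fun i j hij => by rw [← hβc i, ← hβc j, hij]
  have hB : ∀ b ∈ univ.image β, IsBVertex g.H c b := by simp [hβb]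
  have hinj : Set.InjOn c (univ.image β) := by
    intro b₁ hb₁ b₂ hb₂ hb
    obtain ⟨i, -, rfl⟩ := mem_image.1 hb₁
    obtain ⟨j, -, rfl⟩ := mem_image.1 hb₂
    rw [hβc, hβc] at hb
    rw [hb]
  have h3 := three_le_card_inter_xqVertices hprop hB hinj
    (by rw [card_image_of_injective _ hβ, card_univ, Fintype.card_fin]) he
  rw [xqVertices_eq huv] at h3
  obtain ⟨hx, hq⟩ := mem_or_mem_of_three_le_card_inter h3
  exact ⟨hq.elim (fun h => ⟨0, hB _ h⟩) (fun h => ⟨1, hB _ h⟩), hx.imp (hB _) (hB _)⟩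

end Gadget

theorem L_colors_appear_on_Y_general
    {V : Type*} [Fintype V] [DecidableEq V] (G : SimpleGraph V) [DecidableRel G.Adj]
    (wt : Sym2 V → ℕ)
    (g : Gadget V G wt)
    (c : g.VH → Fin (numColors G wt)) (hc : IsBColoring g.H (numColors G wt) c) :
    ∀ e ∈ G.edgeFinset, ∀ u v : V, e = s(u, v) →
      (((g.L e u).image c ⊆ (g.Y e).image c ∨ (g.L e v).image c ⊆ (g.Y e).image c) ∧
        (IsBVertex g.H c (g.x e v) → (g.L e u).image c ⊆ (g.Y e).image c) ∧
        (IsBVertex g.H c (g.x e u) → (g.L e v).image c ⊆ (g.Y e).image c)) := by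
  intro e he u v huv
  obtain ⟨⟨h, hq⟩, hx⟩ := Gadget.exists_isBVertex_q_and_x hc he huv
  have hLv : IsBVertex g.H c (g.x e u) → (g.L e v).image c ⊆ (g.Y e).image c :=
    fun hxu => Gadget.image_L_subset_image_Y hc.1 he huv hxu hq
  have hLu : IsBVertex g.H c (g.x e v) → (g.L e u).image c ⊆ (g.Y e).image c :=
    fun hxv => Gadget.image_L_subset_image_Y hc.1 he (huv.trans Sym2.eq_swap) hxv hq
  exact ⟨hx.symm.imp hLu hLv, hLu, hLv⟩

/-- In any b-coloring of `H` with `k` colors, for each edge `e = uv`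
either all colors of `C_{e,u}` appear on `Y_e` or all colors of `C_{e,v}` appear on
`Y_e`; the former if `x_{e,v}` is a b-vertex, the latter if `x_{e,u}` is a b-vertex. -/
theorem L_colors_appear_on_Y
    {V : Type*} [Fintype V] [DecidableEq V] (G : SimpleGraph V) [DecidableRel G.Adj]
    (wt : Sym2 V → ℕ) (hconn : G.Connected)
    (hwt : ∀ e ∈ G.edgeFinset, 1 ≤ wt e)
    (heven : ∀ v : V, Even (vertW G wt v))
    (g : Gadget V G wt)
    (c : g.VH → Fin (numColors G wt)) (hc : IsBColoring g.H (numColors G wt) c) :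
    ∀ e ∈ G.edgeFinset, ∀ u v : V, e = s(u, v) →
      (((g.L e u).image c ⊆ (g.Y e).image c ∨ (g.L e v).image c ⊆ (g.Y e).image c) ∧
        (IsBVertex g.H c (g.x e v) → (g.L e u).image c ⊆ (g.Y e).image c) ∧
        (IsBVertex g.H c (g.x e u) → (g.L e v).image c ⊆ (g.Y e).image c)) :=
  L_colors_appear_on_Y_general G wt g c hc
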